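/- arXiv:2510.13036 — 2 statements merged into one kernel-verified Lean document; each statement's English description precedes it below -/
import Mathlib

section
/- If two reward functions r̂ and r induce identical regret-based orderings on all trajectory pairs (τ1, τ2) with τ1 in the support of an optimal policy π* for r̂ and τ2 in the support of a reference policy π_ref, then the expected return of π* under r is at least the expected return of π_ref under r: J_r(π*_{r̂}) ≥ J_r(π_ref). -/
open Finset

/-- Transition dynamics of a finite MDP (reward supplied separately). -/
structure Dyn (S A : Type) [Fintype S] where
  P : S → A → S → ℝ
  nonneg : ∀ s a s', 0 ≤ P s a s'
  sum_one : ∀ s a, ∑ s' : S, P s a s' = 1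

variable {S A : Type} [Fintype S] [Fintype A] [DecidableEq S] [Nonempty A]

/-- Optimal value function with `h` steps to go. -/
noncomputable def Vopt (D : Dyn S A) (r : S → A → S → ℝ) (γ : ℝ) : ℕ → S → ℝ
  | 0, _ => 0
  | h + 1, s => Finset.univ.sup' Finset.univ_nonempty
      (fun a => ∑ s' : S, D.P s a s' * (r s a s' + γ * Vopt D r γ h s'))

/-- Optimal action-value function: `h` is the number of steps remaining *after* this step. -/
noncomputable def Qopt (D : Dyn S A) (r : S → A → S → ℝ) (γ : ℝ) (h : ℕ) (s : S) (a : A) : ℝ :=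
  ∑ s' : S, D.P s a s' * (r s a s' + γ * Vopt D r γ h s')

/-- Value of a stochastic policy with `h` steps to go. -/
noncomputable def Vpi (D : Dyn S A) (r : S → A → S → ℝ) (γ : ℝ) (π : S → A → ℝ) : ℕ → S → ℝ
  | 0, _ => 0
  | h + 1, s => ∑ a : A, π s a * ∑ s' : S, D.P s a s' * (r s a s' + γ * Vpi D r γ π h s')

/-- A length-`H` trajectory: `H+1` states and `H` actions. -/
def Traj (S A : Type) (H : ℕ) : Type := (Fin (H + 1) → S) × (Fin H → A)

noncomputable instance (S A : Type) [Fintype S] [Fintype A] (H : ℕ) :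
    Fintype (Traj S A H) := by
  unfold Traj; infer_instance

/-- Probability of a trajectory under policy `π` started at `s0`. -/
noncomputable def trajProb (D : Dyn S A) (π : S → A → ℝ) (s0 : S) {H : ℕ}
    (τ : Traj S A H) : ℝ :=
  (if τ.1 0 = s0 then (1 : ℝ) else 0) *
    ∏ t : Fin H, π (τ.1 t.castSucc) (τ.2 t) * D.P (τ.1 t.castSucc) (τ.2 t) (τ.1 t.succ)

/-- Discounted return of a trajectory. -/
noncomputable def trajReturn (r : S → A → S → ℝ) (γ : ℝ) {H : ℕ} (τ : Traj S A H) : ℝ :=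
  ∑ t : Fin H, γ ^ (t : ℕ) * r (τ.1 t.castSucc) (τ.2 t) (τ.1 t.succ)

/-- Regret of a trajectory: sum of discounted negative optimal advantages. -/
noncomputable def trajRegret (D : Dyn S A) (r : S → A → S → ℝ) (γ : ℝ) {H : ℕ}
    (τ : Traj S A H) : ℝ :=
  ∑ t : Fin H, γ ^ (t : ℕ) *
    (Vopt D r γ (H - t) (τ.1 t.castSucc) - Qopt D r γ (H - 1 - t) (τ.1 t.castSucc) (τ.2 t))

/-- Expected discounted return of a policy from `s0` over horizon `H`. -/
noncomputable def Jret (D : Dyn S A) (r : S → A → S → ℝ) (γ : ℝ) (π : S → A → ℝ)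
    (s0 : S) (H : ℕ) : ℝ :=
  ∑ τ : Traj S A H, trajProb D π s0 τ * trajReturn r γ τ


/-! The regret of a trajectory plus its return telescopes, in expectation over any policy, to the
optimal value `V*_r(s0)`; hence `J_r(π) = V*_r(s0) - E_π[regret_r]`, and it suffices to compare
expected `r`-regrets. Under `r̂` every trajectory of `π*` has zero regret and every trajectory has
nonnegative regret, so the sign agreement says that each trajectory of `π*` has `r`-regret at most
that of each trajectory of `π_ref`, and the inequality passes to expectations. -/

theorem Real.nonpos_of_sign_eq_sign_of_nonpos {x y : ℝ} (h : Real.sign x = Real.sign y)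
    (hx : x ≤ 0) : y ≤ 0 := by
  by_contra! hy
  rw [Real.sign_of_pos hy] at h
  rcases hx.lt_or_eq with hx | rfl
  · rw [Real.sign_of_neg hx] at h; norm_num at h
  · rw [Real.sign_zero] at h; norm_num at h

theorem sum_mul_le_sum_mul_of_le_on_supports {ι : Type*} [Fintype ι] {p q f : ι → ℝ}
    (hp : ∀ i, 0 ≤ p i) (hq : ∀ j, 0 ≤ q j) (hp1 : ∑ i, p i = 1) (hq1 : ∑ j, q j = 1)
    (hf : ∀ i j, 0 < p i → 0 < q j → f i ≤ f j) :
    ∑ i, p i * f i ≤ ∑ j, q j * f j :=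
  calc ∑ i, p i * f i = ∑ i, ∑ j, p i * f i * q j := by
        rw [← Fintype.sum_mul_sum, hq1, mul_one]
    _ ≤ ∑ i, ∑ j, p i * (q j * f j) := by
        refine Finset.sum_le_sum fun i _ => Finset.sum_le_sum fun j _ => ?_
        rcases (hp i).eq_or_lt with hpi | hpi
        · simp [← hpi]
        rcases (hq j).eq_or_lt with hqj | hqj
        · simp [← hqj]
        have := mul_le_mul_of_nonneg_left (hf i j hpi hqj) (mul_nonneg hpi.le hqj.le)
        linarith
    _ = ∑ j, q j * f j := by
        rw [← Fintype.sum_mul_sum, hp1, one_mul]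

def Traj.cons (s : S) (a : A) {H : ℕ} (τ : Traj S A H) : Traj S A (H + 1) :=
  (Fin.cons s τ.1, Fin.cons a τ.2)

def Traj.consEquiv (S A : Type) (H : ℕ) : S × A × Traj S A H ≃ Traj S A (H + 1) where
  toFun x := x.2.2.cons x.1 x.2.1
  invFun τ := (τ.1 0, τ.2 0, (Fin.tail τ.1, Fin.tail τ.2))
  left_inv := by
    rintro ⟨s, a, f, g⟩
    simp [Traj.cons, Fin.tail_cons]
  right_inv := by
    rintro ⟨f, g⟩
    simp [Traj.cons, Fin.cons_self_tail]
    rfl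

section Trajectories

omit [Nonempty A]

variable (D : Dyn S A) (π : S → A → ℝ)

omit [Fintype A] in
theorem trajProb_cons (s0 s : S) (a : A) {H : ℕ} (τ : Traj S A H) :
    trajProb D π s0 (τ.cons s a)
      = (if s = s0 then 1 else 0) * (π s a * D.P s a (τ.1 0)) * trajProb D π (τ.1 0) τ := by
  simp only [trajProb, Traj.cons, Fin.prod_univ_succ, Fin.cons_zero, Fin.cons_succ,
    Fin.castSucc_zero, ← Fin.succ_castSucc, if_true]
  ring

omit [Fintype A] in
theorem trajProb_nonneg (hπ : ∀ s a, 0 ≤ π s a) (s0 : S) {H : ℕ} (τ : Traj S A H) :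
    0 ≤ trajProb D π s0 τ :=
  mul_nonneg (by split_ifs <;> norm_num)
    (Finset.prod_nonneg fun _ _ => mul_nonneg (hπ _ _) (D.nonneg _ _ _))

omit [Fintype A] in
theorem trajProb_eq_zero_of_ne {s0 : S} {H : ℕ} {τ : Traj S A H} (h : τ.1 0 ≠ s0) :
    trajProb D π s0 τ = 0 := by
  rw [trajProb, if_neg h, zero_mul]

theorem sum_trajProb_mul_succ (s0 : S) {H : ℕ} (F : Traj S A (H + 1) → ℝ) :
    ∑ τ, trajProb D π s0 τ * F τ
      = ∑ a, π s0 a * ∑ s1, D.P s0 a s1 * ∑ τ, trajProb D π s1 τ * F (τ.cons s0 a) := by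
  rw [← (Traj.consEquiv S A H).sum_comp, Fintype.sum_prod_type,
    Finset.sum_eq_single_of_mem s0 (Finset.mem_univ _) fun s _ hs => ?_]
  · simp only [Traj.consEquiv, Equiv.coe_fn_mk, trajProb_cons, if_pos, one_mul,
      Fintype.sum_prod_type]
    refine Finset.sum_congr rfl fun a _ => ?_
    simp_rw [Finset.mul_sum]
    rw [Finset.sum_comm]
    refine Finset.sum_congr rfl fun τ _ => ?_
    rw [Finset.sum_eq_single_of_mem (τ.1 0) (Finset.mem_univ _) fun s1 _ hs1 => ?_]
    · ring
    · rw [trajProb_eq_zero_of_ne D π hs1.symm]; ring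
  · simp [Traj.consEquiv, trajProb_cons, hs]

theorem sum_trajProb (hπ1 : ∀ s, ∑ a, π s a = 1) (H : ℕ) (s0 : S) :
    ∑ τ : Traj S A H, trajProb D π s0 τ = 1 := by
  induction H generalizing s0 with
  | zero =>
    rw [Finset.sum_eq_single_of_mem (show Traj S A 0 from (fun _ => s0, Fin.elim0)) (mem_univ _)]
    · simp [trajProb]
    · intro τ _ hτ
      refine trajProb_eq_zero_of_ne D π fun h => hτ ?_
      exact Prod.ext (funext fun i => by rw [Fin.fin_one_eq_zero i, h]) (funext fun i => i.elim0)
  | succ H ih =>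
    simpa [ih, D.sum_one, hπ1] using sum_trajProb_mul_succ D π s0 (H := H) fun _ => 1

theorem sum_trajProb_mul_of_cons_eq (hπ1 : ∀ s, ∑ a, π s a = 1) (s0 : S) {H : ℕ}
    {G : Traj S A (H + 1) → ℝ} (c : A → S → ℝ) (F : Traj S A H → ℝ)
    (hG : ∀ a (τ : Traj S A H), G (τ.cons s0 a) = c a (τ.1 0) + F τ) :
    ∑ τ, trajProb D π s0 τ * G τ
      = ∑ a, π s0 a * ∑ s1, D.P s0 a s1 * (c a s1 + ∑ τ, trajProb D π s1 τ * F τ) := by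
  rw [sum_trajProb_mul_succ]
  refine Finset.sum_congr rfl fun a _ =>
    congrArg _ <| Finset.sum_congr rfl fun s1 _ => congrArg _ ?_
  have hstart : ∀ τ : Traj S A H,
      trajProb D π s1 τ * G (τ.cons s0 a) = trajProb D π s1 τ * (c a s1 + F τ) := by
    intro τ
    by_cases h : τ.1 0 = s1
    · rw [hG, h]
    · simp [trajProb_eq_zero_of_ne D π h]
  simp_rw [hstart, mul_add, Finset.sum_add_distrib, ← Finset.sum_mul, sum_trajProb D π hπ1,
    one_mul]

end Trajectories

section Regret

variable (D : Dyn S A) (r : S → A → S → ℝ) (γ : ℝ)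

omit [Fintype S] [Fintype A] [DecidableEq S] [Nonempty A] in
theorem trajReturn_cons (s : S) (a : A) {H : ℕ} (τ : Traj S A H) :
    trajReturn r γ (τ.cons s a) = r s a (τ.1 0) + γ * trajReturn r γ τ := by
  simp only [trajReturn, Traj.cons, Fin.sum_univ_succ, Fin.cons_zero, Fin.cons_succ,
    Fin.castSucc_zero, ← Fin.succ_castSucc, Fin.val_succ, Fin.val_zero, pow_zero, one_mul,
    pow_succ', mul_assoc, ← Finset.mul_sum]

omit [DecidableEq S] in
theorem trajRegret_cons (s : S) (a : A) {H : ℕ} (τ : Traj S A H) :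
    trajRegret D r γ (τ.cons s a)
      = (Vopt D r γ (H + 1) s - Qopt D r γ H s a) + γ * trajRegret D r γ τ := by
  simp only [trajRegret, Traj.cons, Fin.sum_univ_succ, Fin.cons_zero, Fin.cons_succ,
    Fin.castSucc_zero, ← Fin.succ_castSucc, Fin.val_succ, Fin.val_zero, pow_zero, one_mul,
    Nat.sub_zero, Nat.add_sub_cancel, Finset.mul_sum]
  congr 1
  refine Finset.sum_congr rfl fun t _ => ?_
  rw [Nat.add_sub_add_right, Nat.sub_right_comm, Nat.sub_sub]
  ring

omit [DecidableEq S] in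
theorem Qopt_le_Vopt (h : ℕ) (s : S) (a : A) : Qopt D r γ h s a ≤ Vopt D r γ (h + 1) s :=
  Finset.le_sup' (fun a => Qopt D r γ h s a) (Finset.mem_univ a)

omit [DecidableEq S] in
theorem trajRegret_nonneg (hγ : 0 ≤ γ) {H : ℕ} (τ : Traj S A H) :
    0 ≤ trajRegret D r γ τ := by
  refine Finset.sum_nonneg fun t _ => mul_nonneg (pow_nonneg hγ _) (sub_nonneg.2 ?_)
  obtain ⟨k, hk⟩ : ∃ k, H - t = k + 1 := ⟨H - 1 - t, by omega⟩
  rw [hk, show H - 1 - t = k by omega]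
  exact Qopt_le_Vopt D r γ k _ _

theorem sum_trajProb_mul_regret_add_return {π : S → A → ℝ} (hπ1 : ∀ s, ∑ a, π s a = 1)
    (H : ℕ) (s0 : S) :
    ∑ τ : Traj S A H, trajProb D π s0 τ * (trajRegret D r γ τ + trajReturn r γ τ)
      = Vopt D r γ H s0 := by
  induction H generalizing s0 with
  | zero => simp [trajRegret, trajReturn, Vopt]
  | succ H ih =>
    rw [sum_trajProb_mul_of_cons_eq D π hπ1 s0
      (fun a s1 => Vopt D r γ (H + 1) s0 - Qopt D r γ H s0 a + r s0 a s1)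
      (fun τ => γ * (trajRegret D r γ τ + trajReturn r γ τ))
      fun a τ => by rw [trajRegret_cons, trajReturn_cons]; ring]
    simp_rw [mul_left_comm _ γ, ← Finset.mul_sum, ih]
    have hstep : ∀ a, ∑ s1, D.P s0 a s1 *
        (Vopt D r γ (H + 1) s0 - Qopt D r γ H s0 a + r s0 a s1 + γ * Vopt D r γ H s1)
          = Vopt D r γ (H + 1) s0 := fun a => by
      simp_rw [add_assoc _ (r s0 a _), mul_add _ (_ - _), Finset.sum_add_distrib,
        ← Finset.sum_mul, D.sum_one, one_mul]
      exact sub_add_cancel _ _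
    simp_rw [hstep, ← Finset.sum_mul, hπ1, one_mul]

theorem Jret_eq_Vopt_sub_sum_trajProb_mul_regret {π : S → A → ℝ}
    (hπ1 : ∀ s, ∑ a, π s a = 1) (H : ℕ) (s0 : S) :
    Jret D r γ π s0 H
      = Vopt D r γ H s0 - ∑ τ : Traj S A H, trajProb D π s0 τ * trajRegret D r γ τ := by
  rw [← sum_trajProb_mul_regret_add_return D r γ hπ1, Jret]
  simp only [mul_add, Finset.sum_add_distrib, add_sub_cancel_left]

end Regret

/-- if the repaired reward `rhat` and the ground truth `r` induce identical
regret-based orderings on all inter-policy trajectory pairs (support of an optimal policy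
for `rhat` versus support of the reference policy), then `J_r(π*_{rhat}) ≥ J_r(π_ref)`. -/
theorem ranking_agreement_implies_return_dominance
    (D : Dyn S A) (rhat r : S → A → S → ℝ) (γ : ℝ) (hγ : 0 ≤ γ)
    (H : ℕ) (s0 : S) (πstar πref : S → A → ℝ)
    (hπs0 : ∀ s a, 0 ≤ πstar s a) (hπs1 : ∀ s, ∑ a : A, πstar s a = 1)
    (hπr0 : ∀ s a, 0 ≤ πref s a) (hπr1 : ∀ s, ∑ a : A, πref s a = 1)
    -- `πstar` is optimal for `rhat`: every trajectory in its support has zero regret under `rhat`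
    (hopt : ∀ τ : Traj S A H, 0 < trajProb D πstar s0 τ → trajRegret D rhat γ τ = 0)
    -- identical regret-based orderings on all inter-policy trajectory pairs
    (hsign : ∀ τ1 τ2 : Traj S A H, 0 < trajProb D πstar s0 τ1 →
      0 < trajProb D πref s0 τ2 →
      Real.sign (trajRegret D rhat γ τ1 - trajRegret D rhat γ τ2)
        = Real.sign (trajRegret D r γ τ1 - trajRegret D r γ τ2)) :
    Jret D r γ πref s0 H ≤ Jret D r γ πstar s0 H := by
  have hregret : ∀ τ1 τ2, 0 < trajProb D πstar s0 τ1 → 0 < trajProb D πref s0 τ2 →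
      trajRegret D r γ τ1 ≤ trajRegret D r γ τ2 := fun τ1 τ2 h1 h2 =>
    sub_nonpos.1 <| Real.nonpos_of_sign_eq_sign_of_nonpos (hsign τ1 τ2 h1 h2) <| by
      rw [hopt τ1 h1, zero_sub, neg_nonpos]
      exact trajRegret_nonneg D rhat γ hγ τ2
  rw [Jret_eq_Vopt_sub_sum_trajProb_mul_regret D r γ hπr1,
    Jret_eq_Vopt_sub_sum_trajProb_mul_regret D r γ hπs1]
  exact sub_le_sub_left (sum_mul_le_sum_mul_of_le_on_supports (trajProb_nonneg D πstar hπs0 s0)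
    (trajProb_nonneg D πref hπr0 s0) (sum_trajProb D πstar hπs1 H s0)
    (sum_trajProb D πref hπr1 H s0) hregret) _
end

section
/- For trajectories that begin and end in the same states in an MDP with deterministic transitions, the regret-based preference ordering coincides with the return-based preference ordering: regret(τ1 | r) < regret(τ2 | r) if and only if r(τ1) > r(τ2), where r(τ) is the discounted sum of rewards along τ and both trajectories have the same length H. -/
open Finset

variable {S A : Type} [Fintype S] [Fintype A] [DecidableEq S] [Nonempty A]

/-!
Along a trajectory that follows deterministic dynamics, `Q*(sₜ, aₜ) = r(sₜ, aₜ, sₜ₊₁) + γ V*(sₜ₊₁)`,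
so the discounted regret telescopes to `V*_H(s₀) - r(τ)`, the horizon-`0` value being zero.
Two trajectories from the same start therefore differ in regret by the negated difference of
their returns.
-/

theorem Fin.sum_castSucc_sub_succ {M : Type*} [AddCommGroup M] (n : ℕ) (f : Fin (n + 1) → M) :
    ∑ i : Fin n, (f i.castSucc - f i.succ) = f 0 - f (Fin.last n) := by
  induction n with
  | zero => simp
  | succ n ih =>
    rw [Fin.sum_univ_castSucc]
    simp only [Fin.succ_castSucc]
    rw [ih (fun i => f i.castSucc), Fin.castSucc_zero, Fin.succ_last]
    abel

def Dyn.IsDeterministic (D : Dyn S A) : Prop :=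
  ∀ s a, ∃ s', ∀ s'', D.P s a s'' = if s'' = s' then 1 else 0

omit [Fintype A] [Nonempty A] in
theorem Dyn.IsDeterministic.P_eq_ite {D : Dyn S A} (hD : D.IsDeterministic) {s : S} {a : A}
    {s' : S} (h : D.P s a s' = 1) (s'' : S) : D.P s a s'' = if s'' = s' then 1 else 0 := by
  obtain ⟨t, ht⟩ := hD s a
  obtain rfl : s' = t := by
    by_contra hne
    simp [ht s', hne] at h
  exact ht s''

theorem Qopt_of_P_eq_ite (D : Dyn S A) (r : S → A → S → ℝ) (γ : ℝ) (h : ℕ) {s : S} {a : A}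
    {s' : S} (hP : ∀ s'', D.P s a s'' = if s'' = s' then 1 else 0) :
    Qopt D r γ h s a = r s a s' + γ * Vopt D r γ h s' := by
  simp [Qopt, hP, ite_mul]

theorem trajRegret_eq_Vopt_sub_trajReturn (D : Dyn S A) (r : S → A → S → ℝ) (γ : ℝ) {H : ℕ}
    (τ : Traj S A H)
    (hτ : ∀ t : Fin H, ∀ s'',
      D.P (τ.1 t.castSucc) (τ.2 t) s'' = if s'' = τ.1 t.succ then 1 else 0) :
    trajRegret D r γ τ = Vopt D r γ H (τ.1 0) - trajReturn r γ τ := by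
  set f : Fin (H + 1) → ℝ := fun i => γ ^ (i : ℕ) * Vopt D r γ (H - i) (τ.1 i) with hf
  have step : ∀ t : Fin H,
      γ ^ (t : ℕ) *
        (Vopt D r γ (H - t) (τ.1 t.castSucc) - Qopt D r γ (H - 1 - t) (τ.1 t.castSucc) (τ.2 t))
      = (f t.castSucc - f t.succ) - γ ^ (t : ℕ) * r (τ.1 t.castSucc) (τ.2 t) (τ.1 t.succ) := by
    intro t
    have hH : H - ((t : ℕ) + 1) = H - 1 - t := by omega
    rw [Qopt_of_P_eq_ite D r γ _ (hτ t)]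
    simp only [hf, Fin.val_castSucc, Fin.val_succ, hH, pow_succ]
    ring
  have hf0 : f 0 = Vopt D r γ H (τ.1 0) := by simp [hf]
  have hfH : f (Fin.last H) = 0 := by simp [hf, Vopt]
  rw [trajRegret, Finset.sum_congr rfl fun t _ => step t, Finset.sum_sub_distrib,
    Fin.sum_castSucc_sub_succ, hf0, hfH, sub_zero, trajReturn]

theorem regret_order_iff_return_order_general
    (D : Dyn S A) (r : S → A → S → ℝ) (γ : ℝ)
    (H : ℕ) (s0 : S) (τ1 τ2 : Traj S A H)
    -- deterministic transitions
    (hdet : ∀ s a, ∃ s', ∀ s'', D.P s a s'' = if s'' = s' then 1 else 0)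
    -- both trajectories start at `s0` and end at `sH`
    (h1s : τ1.1 0 = s0) (h2s : τ2.1 0 = s0)
    -- both trajectories are consistent with the dynamics
    (hfeas1 : ∀ t : Fin H, D.P (τ1.1 t.castSucc) (τ1.2 t) (τ1.1 t.succ) = 1)
    (hfeas2 : ∀ t : Fin H, D.P (τ2.1 t.castSucc) (τ2.2 t) (τ2.1 t.succ) = 1) :
    trajRegret D r γ τ1 < trajRegret D r γ τ2 ↔ trajReturn r γ τ2 < trajReturn r γ τ1 := by
  have hD : D.IsDeterministic := hdet
  rw [trajRegret_eq_Vopt_sub_trajReturn D r γ τ1 fun t => hD.P_eq_ite (hfeas1 t),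
    trajRegret_eq_Vopt_sub_trajReturn D r γ τ2 fun t => hD.P_eq_ite (hfeas2 t), h1s, h2s]
  exact sub_lt_sub_iff_left _

/-- in an MDP with deterministic transitions, for two dynamically feasible
trajectories of the same length `H` that begin and end in the same states, the regret-based
ordering coincides with the return-based ordering. -/
theorem regret_order_iff_return_order
    (D : Dyn S A) (r : S → A → S → ℝ) (γ : ℝ) (hγ : 0 ≤ γ)
    (H : ℕ) (s0 sH : S) (τ1 τ2 : Traj S A H)
    -- deterministic transitions
    (hdet : ∀ s a, ∃ s', ∀ s'', D.P s a s'' = if s'' = s' then 1 else 0)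
    -- both trajectories start at `s0` and end at `sH`
    (h1s : τ1.1 0 = s0) (h2s : τ2.1 0 = s0)
    (h1e : τ1.1 (Fin.last H) = sH) (h2e : τ2.1 (Fin.last H) = sH)
    -- both trajectories are consistent with the dynamics
    (hfeas1 : ∀ t : Fin H, D.P (τ1.1 t.castSucc) (τ1.2 t) (τ1.1 t.succ) = 1)
    (hfeas2 : ∀ t : Fin H, D.P (τ2.1 t.castSucc) (τ2.2 t) (τ2.1 t.succ) = 1) :
    trajRegret D r γ τ1 < trajRegret D r γ τ2 ↔ trajReturn r γ τ2 < trajReturn r γ τ1 :=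
  regret_order_iff_return_order_general D r γ H s0 τ1 τ2 hdet h1s h2s hfeas1 hfeas2
end
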